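/- Let A be a unital associative ℂ-algebra with a star operation, Θ : A ≃ₐ[ℂ] A an algebra automorphism with Θ(Θ x) = x and Θ(star x) = star(Θ x) for all x, and call x odd if Θ x = −x. Let A₁, A₂ be star-closed ℂ-subalgebras of A such that every odd element of A₁ anticommutes with every odd element of A₂ (x ∈ A₁, y ∈ A₂, Θ x = −x, Θ y = −y imply x*y + y*x = 0). Let ω, ω₁, ω₂ be hermitian ℂ-linear functionals on A such that ω(x*y) = ω₁(x) · ω₂(y) for all x ∈ A₁ and y ∈ A₂. If there exists an odd element x₀ ∈ A₁ with ω₁(x₀) ≠ 0, then ω₂(y) = 0 for every odd element y ∈ A₂. -/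
import Mathlib


/-- paper's Lemma 1: if a hermitian functional `ω` factorizes as
`ω (x * y) = ω₁ x * ω₂ y` over a fermionic bipartition `(A₁, A₂)` (odd parts
anticommute), and `ω₁` does not vanish on the odd part of `A₁`, then `ω₂`
vanishes on the odd part of `A₂`. -/
theorem product_functional_vanishes_on_odd_component
    {A : Type*} [Ring A] [Algebra ℂ A] [StarRing A] [StarModule ℂ A]
    (Θ : A ≃ₐ[ℂ] A) (hΘ2 : ∀ x : A, Θ (Θ x) = x)
    (hΘstar : ∀ x : A, Θ (star x) = star (Θ x))
    (A₁ A₂ : Subalgebra ℂ A)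
    (hstar₁ : ∀ x ∈ A₁, star x ∈ A₁) (hstar₂ : ∀ y ∈ A₂, star y ∈ A₂)
    (hanti : ∀ x ∈ A₁, ∀ y ∈ A₂, Θ x = -x → Θ y = -y → x * y + y * x = 0)
    (ω ω₁ ω₂ : A →ₗ[ℂ] ℂ)
    (hω : ∀ x : A, ω (star x) = starRingEnd ℂ (ω x))
    (hω₁ : ∀ x : A, ω₁ (star x) = starRingEnd ℂ (ω₁ x))
    (hω₂ : ∀ x : A, ω₂ (star x) = starRingEnd ℂ (ω₂ x))
    (hprod : ∀ x ∈ A₁, ∀ y ∈ A₂, ω (x * y) = ω₁ x * ω₂ y)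
    (x₀ : A) (hx₀ : x₀ ∈ A₁) (hx₀odd : Θ x₀ = -x₀) (hx₀ne : ω₁ x₀ ≠ 0) :
    ∀ y ∈ A₂, Θ y = -y → ω₂ y = 0 := by
  intro y hy hyodd
  have hsx : star x₀ ∈ A₁ := hstar₁ _ hx₀
  have hsy : star y ∈ A₂ := hstar₂ _ hy
  have hsxodd : Θ (star x₀) = -(star x₀) := by rw [hΘstar, hx₀odd, star_neg]
  have hsyodd : Θ (star y) = -(star y) := by rw [hΘstar, hyodd, star_neg]
  have hac : star x₀ * star y + star y * star x₀ = 0 :=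
    hanti _ hsx _ hsy hsxodd hsyodd
  have hswap : star y * star x₀ = -(star x₀ * star y) :=
    eq_neg_of_add_eq_zero_right hac
  have key : (starRingEnd ℂ) (ω₁ x₀ * ω₂ y)
      = -((starRingEnd ℂ) (ω₁ x₀ * ω₂ y)) := by
    calc (starRingEnd ℂ) (ω₁ x₀ * ω₂ y)
        = (starRingEnd ℂ) (ω (x₀ * y)) := by rw [hprod _ hx₀ _ hy]
      _ = ω (star (x₀ * y)) := (hω _).symm
      _ = ω (star y * star x₀) := by rw [star_mul]
      _ = -(ω (star x₀ * star y)) := by rw [hswap, map_neg]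
      _ = -(ω₁ (star x₀) * ω₂ (star y)) := by rw [hprod _ hsx _ hsy]
      _ = -((starRingEnd ℂ) (ω₁ x₀ * ω₂ y)) := by rw [hω₁, hω₂, map_mul]
  have hz : ω₁ x₀ * ω₂ y = 0 := by
    have : (starRingEnd ℂ) (ω₁ x₀ * ω₂ y) = 0 := by linear_combination key / 2
    simpa using congrArg (starRingEnd ℂ) this
  exact (mul_eq_zero.mp hz).resolve_left hx₀ne
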